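/- arXiv:1405.0814 — 5 statements merged into one kernel-verified Lean document; each statement's English description precedes it below -/
import Mathlib

section
/- Let B ⊆ ℝ^k and C ⊆ ℝ^l be convex sets, with Pareto optimality defined via minimization of c^T x for some strictly positive c. Then the Pareto front of the product set B × C equals the product of the Pareto fronts: 𝕆(B × C) = 𝕆(B) × 𝕆(C). -/
open Matrix

/-- For convex B ⊆ ℝ^k and C ⊆ ℝ^l, the Pareto front (w.r.t. minimization of strictly
positive linear costs) of the product B × C equals the product of the Pareto fronts. -/
theorem paretoFront_prod (k l : ℕ) (B : Set (Fin k → ℝ)) (C : Set (Fin l → ℝ))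
    (hB : Convex ℝ B) (hC : Convex ℝ C) :
    {x ∈ B ×ˢ C | ∃ (c₁ : Fin k → ℝ) (c₂ : Fin l → ℝ),
        (∀ i, 0 < c₁ i) ∧ (∀ i, 0 < c₂ i) ∧
        ∀ y ∈ B ×ˢ C, c₁ ⬝ᵥ x.1 + c₂ ⬝ᵥ x.2 ≤ c₁ ⬝ᵥ y.1 + c₂ ⬝ᵥ y.2}
      =
    {x ∈ B | ∃ c : Fin k → ℝ, (∀ i, 0 < c i) ∧ ∀ y ∈ B, c ⬝ᵥ x ≤ c ⬝ᵥ y} ×ˢ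
    {x ∈ C | ∃ c : Fin l → ℝ, (∀ i, 0 < c i) ∧ ∀ y ∈ C, c ⬝ᵥ x ≤ c ⬝ᵥ y} := by
  ext x
  simp only [Set.mem_setOf_eq, Set.mem_sep_iff, Set.mem_prod]
  constructor
  · rintro ⟨⟨hx1, hx2⟩, c₁, c₂, hc₁, hc₂, hmin⟩
    refine ⟨⟨hx1, c₁, hc₁, fun y hy => ?_⟩, hx2, c₂, hc₂, fun y hy => ?_⟩
    · have := hmin (y, x.2) ⟨hy, hx2⟩
      simpa using this
    · have := hmin (x.1, y) ⟨hx1, hy⟩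
      simpa using this
  · rintro ⟨⟨hx1, c₁, hc₁, h₁⟩, hx2, c₂, hc₂, h₂⟩
    exact ⟨⟨hx1, hx2⟩, c₁, c₂, hc₁, hc₂, fun y hy =>
      add_le_add (h₁ y.1 hy.1) (h₂ y.2 hy.2)⟩
end

section
/- Let W be a 2×2 Hermitian positive semidefinite matrix with W₁₁ W₂₂ > |W₁₂|², and let α ∈ ℝ. Define b := Re(W₁₂ e^{i(π/2 − α)}) and c := W₁₁W₂₂ − |W₁₂|² > 0. Then r := √(b² + c) − b is strictly positive, and the matrix Ŵ with Ŵ₁₁ = W₁₁, Ŵ₂₂ = W₂₂, Ŵ₁₂ = W₁₂ + r e^{−i(π/2 − α)} (and Ŵ₂₁ = Ŵ₁₂^H) is positive semidefinite of rank 1, i.e., Ŵ₁₁ Ŵ₂₂ = |Ŵ₁₂|². -/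
open Real Complex ComplexConjugate

/-
With `u := exp (-i(π/2 - α))`, a unit complex number, and `b := Re (W₁₂ ū)`, expanding the square gives
`|W₁₂ + r u|² = |W₁₂|² + 2 r b + r²`. The rank-one condition `W₁₁ W₂₂ = |W₁₂ + r u|²` is therefore the
quadratic equation `r² + 2 b r - c = 0`, and `r = √(b² + c) - b` is its root, positive because `c > 0`.
-/

theorem Real.sqrt_sq_add_sub_pos {b c : ℝ} (hc : 0 < c) : 0 < √(b ^ 2 + c) - b := by
  have : |b| < √(b ^ 2 + c) := by
    rw [← Real.sqrt_sq_eq_abs]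
    exact Real.sqrt_lt_sqrt (sq_nonneg b) (by linarith)
  linarith [le_abs_self b]

theorem Real.sqrt_sq_add_sub_sq_add_two_mul {b c : ℝ} (h : 0 ≤ b ^ 2 + c) :
    (√(b ^ 2 + c) - b) ^ 2 + 2 * (√(b ^ 2 + c) - b) * b = c := by
  linear_combination Real.sq_sqrt h

theorem Complex.sq_norm_add_ofReal_mul {z u : ℂ} (hu : ‖u‖ = 1) (r : ℝ) :
    ‖z + r * u‖ ^ 2 = ‖z‖ ^ 2 + 2 * r * (z * conj u).re + r ^ 2 := by
  rw [Complex.sq_norm, Complex.sq_norm, normSq_add, normSq_mul, normSq_ofReal, ← Complex.sq_norm u,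
    hu, map_mul, conj_ofReal, mul_left_comm, re_ofReal_mul]
  ring

theorem Complex.conj_exp_neg_I_mul_ofReal (θ : ℝ) : conj (exp (-I * θ)) = exp (I * θ) := by
  rw [← exp_conj, map_mul, map_neg, conj_I, conj_ofReal, neg_neg]

theorem Complex.norm_exp_neg_I_mul_ofReal (θ : ℝ) : ‖exp (-I * θ)‖ = 1 := by
  rw [neg_mul, ← mul_neg, mul_comm, ← ofReal_neg, norm_exp_ofReal_mul_I]

theorem rankOne_correction_general (W11 W22 : ℝ)
    (W12 : ℂ) (α : ℝ) (h : ‖W12‖ ^ 2 < W11 * W22) :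
    let b : ℝ := (W12 * Complex.exp (Complex.I * ((π / 2 : ℝ) - α))).re
    let c : ℝ := W11 * W22 - ‖W12‖ ^ 2
    let r : ℝ := Real.sqrt (b ^ 2 + c) - b
    0 < r ∧
    W11 * W22 = ‖W12 + r * Complex.exp (-Complex.I * ((π / 2 : ℝ) - α))‖ ^ 2 := by
  intro b c r
  have hc : 0 < c := sub_pos.mpr h
  refine ⟨Real.sqrt_sq_add_sub_pos hc, ?_⟩
  have hroot : r ^ 2 + 2 * r * b = c :=
    Real.sqrt_sq_add_sub_sq_add_two_mul (by positivity)
  have hexpand : ‖W12 + r * exp (-I * ((π / 2 : ℝ) - α))‖ ^ 2 = ‖W12‖ ^ 2 + 2 * r * b + r ^ 2 := by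
    rw [← ofReal_sub, sq_norm_add_ofReal_mul (norm_exp_neg_I_mul_ofReal _),
      conj_exp_neg_I_mul_ofReal, ofReal_sub]
  linarith

/-- Rank-one correction of a 2×2 Hermitian psd matrix: given diagonal entries
W₁₁, W₂₂ ≥ 0 and off-diagonal W₁₂ with W₁₁W₂₂ > |W₁₂|², setting
r = √(b² + c) − b with b = Re(W₁₂ e^{i(π/2−α)}) and c = W₁₁W₂₂ − |W₁₂|²,
we have r > 0 and the modified matrix with off-diagonal
W₁₂ + r e^{−i(π/2−α)} satisfies W₁₁W₂₂ = |Ŵ₁₂|², i.e., it is psd of rank 1. -/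
theorem rankOne_correction (W11 W22 : ℝ) (hW11 : 0 ≤ W11) (hW22 : 0 ≤ W22)
    (W12 : ℂ) (α : ℝ) (h : ‖W12‖ ^ 2 < W11 * W22) :
    let b : ℝ := (W12 * Complex.exp (Complex.I * ((π / 2 : ℝ) - α))).re
    let c : ℝ := W11 * W22 - ‖W12‖ ^ 2
    let r : ℝ := Real.sqrt (b ^ 2 + c) - b
    0 < r ∧
    W11 * W22 = ‖W12 + r * Complex.exp (-Complex.I * ((π / 2 : ℝ) - α))‖ ^ 2 :=
  rankOne_correction_general W11 W22 W12 α h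
end

section
/- Let G = (N, E) be a tree on n+1 nodes rooted at node 0, and let W be a Hermitian partial matrix defined on G (entries W_jj for all j and W_jk for (j,k) ∈ E) such that each 2×2 principal submatrix W(j,k) = [[W_jj, W_jk],[W_kj, W_kk]] is positive semidefinite with W_jj W_kk = |W_jk|². Then there exists x ∈ ℂ^{n+1} with |x_j|² = W_jj for all j and x_j x_k^H = W_jk for all (j,k) ∈ E. -/
/-!
On a tree, every "antisymmetric" edge labelling `c k j = (c j k)⁻¹` with values in a group is a
coboundary `c j k = f j * (f k)⁻¹`: take for `f v` the product of the labels along the unique path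
from `v` to a fixed root, since for an edge `j k` one of the two root paths extends the other by that
edge. Applied to the unit phases `e^{i arg W_jk}` in the circle group, this gives the phases of `x`;
the moduli are `√W_jj`, and the rank-one condition `√W_jj √W_kk = |W_jk|` matches the products.
-/

open SimpleGraph Complex ComplexConjugate

namespace SimpleGraph

variable {V : Type*} {G : SimpleGraph V}

theorem IsAcyclic.eq_cons_or_eq_cons (hG : G.IsAcyclic) {u v w : V} {p : G.Walk v u}
    {q : G.Walk w u} (hp : p.IsPath) (hq : q.IsPath) (hadj : G.Adj v w) :
    p = .cons hadj q ∨ q = .cons hadj.symm p := by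
  by_cases hv : v ∈ q.reverse.support
  · right
    rw [← Walk.reverse_reverse q, hG.path_concat hp.reverse hq.reverse hadj hv,
      Walk.reverse_concat, Walk.reverse_reverse]
  · left
    have hw : w ∈ p.reverse.support :=
      hG.mem_support_of_ne_mem_support_of_adj_of_isPath hp.reverse hq.reverse hadj hv
    rw [← Walk.reverse_reverse p, hG.path_concat hq.reverse hp.reverse hadj.symm hw,
      Walk.reverse_concat, Walk.reverse_reverse]

theorem IsTree.exists_mul_inv_eq {Γ : Type*} [Group Γ] (hG : G.IsTree) (c : V → V → Γ)
    (hc : ∀ j k, G.Adj j k → c k j = (c j k)⁻¹) :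
    ∃ f : V → Γ, ∀ j k, G.Adj j k → f j * (f k)⁻¹ = c j k := by
  obtain ⟨r⟩ := hG.connected.nonempty
  choose P hP using fun v => (hG.connected v r).exists_isPath
  refine ⟨fun v => ((P v).darts.map fun d => c d.fst d.snd).prod, fun j k hjk => ?_⟩
  rcases hG.isAcyclic.eq_cons_or_eq_cons (hP j) (hP k) hjk with h | h
  · simp [h, mul_assoc]
  · simp [h, hc j k hjk]

end SimpleGraph

theorem Circle.exp_arg_conj (z : ℂ) : Circle.exp (arg (conj z)) = (Circle.exp (arg z))⁻¹ := by
  rw [← Real.Angle.toCircle_coe, arg_conj_coe_angle, Real.Angle.toCircle_neg,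
    Real.Angle.toCircle_coe]

/-- Completion of a 2×2-rank-1 Hermitian partial matrix on a tree:
if every edge submatrix [[W_jj, W_jk],[W_kj, W_kk]] is psd with
W_jj W_kk = |W_jk|², then there is x ∈ ℂ^{n+1} with |x_j|² = W_jj and
x_j x_k^H = W_jk on all edges. -/
theorem partial_matrix_tree_completion (n : ℕ) (G : SimpleGraph (Fin (n + 1)))
    (htree : G.IsTree)
    (Wd : Fin (n + 1) → ℝ) (Wo : Fin (n + 1) → Fin (n + 1) → ℂ)
    (hdiag : ∀ j, 0 ≤ Wd j)
    (hherm : ∀ j k, G.Adj j k → Wo k j = starRingEnd ℂ (Wo j k))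
    (hrank1 : ∀ j k, G.Adj j k → Wd j * Wd k = ‖Wo j k‖ ^ 2) :
    ∃ x : Fin (n + 1) → ℂ,
      (∀ j, ‖x j‖ ^ 2 = Wd j) ∧
      (∀ j k, G.Adj j k → x j * starRingEnd ℂ (x k) = Wo j k) := by
  obtain ⟨φ, hφ⟩ := htree.exists_mul_inv_eq (fun j k => Circle.exp (arg (Wo j k)))
    fun j k hjk => by rw [hherm j k hjk, Circle.exp_arg_conj]
  refine ⟨fun j => (√(Wd j) : ℂ) * φ j, fun j => ?_, fun j k hjk => ?_⟩
  · simp [Circle.norm_coe, Real.sq_sqrt (hdiag j)]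
  · have hmod : √(Wd j) * √(Wd k) = ‖Wo j k‖ := by
      rw [← Real.sqrt_mul (hdiag j), hrank1 j k hjk, Real.sqrt_sq (norm_nonneg _)]
    calc (√(Wd j) : ℂ) * φ j * conj ((√(Wd k) : ℂ) * φ k)
        = ((√(Wd j) * √(Wd k) : ℝ) : ℂ) * ↑(φ j * (φ k)⁻¹) := by
          rw [Circle.coe_mul, Circle.coe_inv_eq_conj, map_mul, conj_ofReal]
          push_cast
          ring
      _ = Wo j k := by
          rw [hmod, hφ j k hjk, Circle.coe_exp, norm_mul_exp_arg_mul_I]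
end

section
/- Let v̂₁, v₁, v̂₂, v₂ be positive reals, Ŝ, S complex numbers and ℓ̂, ℓ > 0, and suppose v̂₂ ℓ̂ = |Ŝ|² and v₂ ℓ = |S|², and suppose the midpoint also satisfies the equality (v̂₂+v₂)(ℓ̂+ℓ) = |Ŝ+S|². Then ∠Ŝ = ∠S and (v̂₂/v₂)|S| = |Ŝ|, hence (v̂₂/v₂) S = Ŝ and (v̂₂/v₂) ℓ = ℓ̂. -/
open Complex

set_option maxHeartbeats 1000000 in
/-- Key algebraic step in the uniqueness proof for exact SOCP relaxation:
if v̂ ℓ̂ = |Ŝ|², v ℓ = |S|² (all positive), and the midpoint also satisfies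
(v̂+v)(ℓ̂+ℓ) = |Ŝ+S|², then ∠Ŝ = ∠S and η|S| = |Ŝ| with η = v̂/v, hence
η S = Ŝ and η ℓ = ℓ̂. -/
theorem socp_uniqueness_step (vhat v lhat l : ℝ) (Shat S : ℂ)
    (hvhat : 0 < vhat) (hv : 0 < v) (hlhat : 0 < lhat) (hl : 0 < l)
    (h1 : vhat * lhat = ‖Shat‖ ^ 2)
    (h2 : v * l = ‖S‖ ^ 2)
    (h3 : (vhat + v) * (lhat + l) = ‖Shat + S‖ ^ 2) :
    Complex.arg Shat = Complex.arg S ∧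
    (vhat / v) * ‖S‖ = ‖Shat‖ ∧
    ((vhat / v : ℝ) : ℂ) * S = Shat ∧
    (vhat / v) * l = lhat := by
  have hnsq : ∀ z : ℂ, ‖z‖ ^ 2 = Complex.normSq z := fun z => Complex.sq_norm z
  -- key equality from expansion
  have hkey : vhat * l + v * lhat = 2 * (Shat * (starRingEnd ℂ) S).re := by
    have h3' := h3
    rw [hnsq, Complex.normSq_add, ← hnsq, ← hnsq, ← h1, ← h2] at h3'
    linarith
  -- Cauchy–Schwarz: re ≤ |Shat||S|
  have hcs : (Shat * (starRingEnd ℂ) S).re ≤ ‖Shat‖ * ‖S‖ := by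
    calc (Shat * (starRingEnd ℂ) S).re ≤ ‖Shat * (starRingEnd ℂ) S‖ :=
          Complex.re_le_norm _
      _ = ‖Shat‖ * ‖S‖ := by rw [norm_mul, Complex.norm_conj]
  set a := vhat * l with ha
  set b := v * lhat with hb
  have hapos : 0 < a := mul_pos hvhat hl
  have hbpos : 0 < b := mul_pos hv hlhat
  have hst : Real.sqrt a * Real.sqrt b = ‖Shat‖ * ‖S‖ := by
    have h : (Real.sqrt a * Real.sqrt b) ^ 2 = (‖Shat‖ * ‖S‖) ^ 2 := by
      rw [mul_pow, Real.sq_sqrt hapos.le, Real.sq_sqrt hbpos.le, mul_pow, ← h1, ← h2]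
      ring
    have h1' : 0 ≤ Real.sqrt a * Real.sqrt b := by positivity
    have h2' : 0 ≤ ‖Shat‖ * ‖S‖ := by positivity
    nlinarith
  have hsq : (Real.sqrt a - Real.sqrt b) ^ 2 = 0 := by
    have h1' : Real.sqrt a ^ 2 = a := Real.sq_sqrt hapos.le
    have h2' : Real.sqrt b ^ 2 = b := Real.sq_sqrt hbpos.le
    nlinarith [sq_nonneg (Real.sqrt a - Real.sqrt b)]
  have hab : a = b := by
    have := pow_eq_zero_iff (n := 2) (by norm_num) |>.mp hsq
    have h1' : Real.sqrt a ^ 2 = a := Real.sq_sqrt hapos.le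
    have h2' : Real.sqrt b ^ 2 = b := Real.sq_sqrt hbpos.le
    nlinarith
  have hre : (Shat * (starRingEnd ℂ) S).re = ‖Shat‖ * ‖S‖ := by
    have h1' : Real.sqrt a ^ 2 = a := Real.sq_sqrt hapos.le
    have h2' : Real.sqrt b ^ 2 = b := Real.sq_sqrt hbpos.le
    nlinarith
  set η := vhat / v with hη
  have hηpos : 0 < η := div_pos hvhat hv
  have hlast : η * l = lhat := by
    rw [hη, div_mul_eq_mul_div, ← ha, hab, hb, mul_comm, mul_div_assoc,
      div_self hv.ne', mul_one]
  have hSpos : 0 < ‖S‖ := by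
    apply norm_pos_iff.mpr
    intro h
    rw [h] at h2
    simp only [norm_zero] at h2
    linarith [mul_pos hv hl]
  have hShatpos : 0 < ‖Shat‖ := by
    apply norm_pos_iff.mpr
    intro h
    rw [h] at h1
    simp only [norm_zero] at h1
    linarith [mul_pos hvhat hlhat]
  have habs : η * ‖S‖ = ‖Shat‖ := by
    have h : (η * ‖S‖) ^ 2 = ‖Shat‖ ^ 2 := by
      rw [mul_pow, ← h1, ← h2, ← hlast]
      field_simp [hη]
      rw [hη, div_mul_cancel₀ _ hv.ne']
    nlinarith
  have hES : ((η : ℝ) : ℂ) * S = Shat := by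
    have hz : Complex.normSq (Shat - (η : ℂ) * S) = 0 := by
      rw [Complex.normSq_sub]
      have hconj : (Shat * (starRingEnd ℂ) ((η : ℂ) * S)).re
          = η * (Shat * (starRingEnd ℂ) S).re := by
        rw [map_mul, Complex.conj_ofReal]
        rw [show Shat * ((η:ℂ) * (starRingEnd ℂ) S) = (η:ℂ) * (Shat * (starRingEnd ℂ) S) by ring]
        simp [Complex.re_ofReal_mul]
      rw [hconj, Complex.normSq_mul]
      simp only [Complex.normSq_ofReal]
      rw [← hnsq, ← hnsq, ← h1, ← h2, hre, ← habs]
      nlinarith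
    have := Complex.normSq_eq_zero.mp hz
    linear_combination -this
  have harg : Complex.arg Shat = Complex.arg S := by
    rw [← hES, Complex.arg_real_mul S hηpos]
  exact ⟨harg, habs, hES, hlast⟩
end

section
/- Under the setup of the backward linear recursions above, for each fixed τ with 0 < τ < m and each t with 0 ≤ t ≤ τ, the difference satisfies w(t;τ) − w̲(t;τ) = Σ_{t'=t+1}^{τ} a(t';τ) · w(t;t'−1), where a(t';τ) := 2 δ_{t'}^T w̲(t';τ). -/
open Matrix

/-- The difference of the two backward recursions satisfies
w(t;τ) − w̲(t;τ) = Σ_{t'=t+1}^{τ} a(t';τ) w(t;t'−1) with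
a(t';τ) = 2 δ_{t'}ᵀ w̲(t';τ). -/
theorem recursion_difference_identity (m : ℕ)
    (Atil Alow : ℕ → Matrix (Fin 2) (Fin 2) ℝ)
    (z δ : ℕ → Fin 2 → ℝ)
    (hrank1 : ∀ t, 1 ≤ t → t < m → ∀ i j, Atil t i j - Alow t i j = 2 * z t i * δ t j)
    (w wlow : ℕ → ℕ → Fin 2 → ℝ)
    (hwterm : ∀ τ, τ < m → w τ τ = z (τ + 1))
    (hwlowterm : ∀ τ, τ < m → wlow τ τ = z (τ + 1))
    (hwrec : ∀ τ, τ < m → ∀ t, t < τ → w t τ = (Atil (t + 1)).mulVec (w (t + 1) τ))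
    (hwlowrec : ∀ τ, τ < m → ∀ t, t < τ → wlow t τ = (Alow (t + 1)).mulVec (wlow (t + 1) τ)) :
    ∀ τ, 0 < τ → τ < m → ∀ t, t ≤ τ → ∀ i,
      w t τ i - wlow t τ i =
        ∑ t' ∈ Finset.Icc (t + 1) τ, (2 * (δ t' ⬝ᵥ wlow t' τ)) * w t (t' - 1) i := by
  intro τ hτ0 hτm
  suffices h : ∀ d t, t + d = τ → ∀ i,
      w t τ i - wlow t τ i =
        ∑ t' ∈ Finset.Icc (t + 1) τ, (2 * (δ t' ⬝ᵥ wlow t' τ)) * w t (t' - 1) i by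
    intro t ht i
    exact h (τ - t) t (by omega) i
  intro d
  induction d with
  | zero =>
    intro t ht i
    have hteq : t = τ := by omega
    subst hteq
    rw [hwterm t hτm, hwlowterm t hτm, Finset.Icc_eq_empty (by omega)]
    simp
  | succ d ih =>
    intro t ht i
    have htτ : t < τ := by omega
    have h1 : t + 1 + d = τ := by omega
    have hd : ∀ j, Atil (t+1) i j - Alow (t+1) i j = 2 * z (t+1) i * δ (t+1) j :=
      hrank1 (t+1) (by omega) (by omega) i
    have ihj := ih (t+1) h1
    have hsum : ∑ t' ∈ Finset.Icc (t+2) τ, (2 * (δ t' ⬝ᵥ wlow t' τ)) * w t (t'-1) i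
        = Atil (t+1) i 0 * (∑ t' ∈ Finset.Icc (t+2) τ, (2 * (δ t' ⬝ᵥ wlow t' τ)) * w (t+1) (t'-1) 0)
        + Atil (t+1) i 1 * (∑ t' ∈ Finset.Icc (t+2) τ, (2 * (δ t' ⬝ᵥ wlow t' τ)) * w (t+1) (t'-1) 1) := by
      rw [Finset.mul_sum, Finset.mul_sum, ← Finset.sum_add_distrib]
      apply Finset.sum_congr rfl
      intro t' ht'
      simp only [Finset.mem_Icc] at ht'
      rw [hwrec (t'-1) (by omega) t (by omega)]
      have h2 : t' - 1 - 1 + 1 + 1 = t' := by omega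
      simp [mulVec, dotProduct, Fin.sum_univ_two]
      ring
    have hsplit : Finset.Icc (t+1) τ = insert (t+1) (Finset.Icc (t+2) τ) := by
      ext x
      simp only [Finset.mem_Icc, Finset.mem_insert]
      omega
    rw [hwrec τ hτm t htτ, hwlowrec τ hτm t htτ, hsplit,
      Finset.sum_insert (by simp [Finset.mem_Icc]), hsum]
    have hwt : w t (t + 1 - 1) i = z (t+1) i := by
      rw [Nat.add_sub_cancel, hwterm t (by omega)]
    rw [hwt]
    simp only [mulVec, dotProduct, Fin.sum_univ_two] at ihj ⊢
    linear_combination Atil (t+1) i 0 * ihj 0 + Atil (t+1) i 1 * ihj 1 +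
      wlow (t+1) τ 0 * hd 0 + wlow (t+1) τ 1 * hd 1
end
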